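/- For the upper triangular matrix walk on M_n(𝔽₂), the process obtained by projecting onto the j-th column (for 2 ≤ j ≤ n) is itself a Markov chain: the generator applied to any function depending only on the j-th column yields a function depending only on the j-th column, and the resulting column process has the generator of the East process on [j−1] at density 1/2 (in the convention where entry i of the column can be resampled to a uniform bit at rate 1 if entry i+1 of the column equals 1, for 1 ≤ i ≤ j−1). -/

import Mathlib

/-!
The move `M ↦ (1 + a E^{i,i+1}) M` adds `a` times row `i+1` to row `i`, so in column `j` it
only changes entry `i`, to `M i j + a * M (i+1) j`. For uniform `a` this entry is resampled
uniformly when `M (i+1) j = 1` and left alone when `M (i+1) j = 0`, which is the East move.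
-/

open Matrix

/-- The generator of the continuous-time upper triangular matrix walk:
`(Lf)(M) = (1/2) ∑_{i=1}^{n−1} ∑_{a∈{0,1}} [f((I + aE^{i,i+1})M) − f(M)]`. -/
noncomputable def matrixWalkGen (n : ℕ)
    (f : Matrix (Fin n) (Fin n) (ZMod 2) → ℝ)
    (M : Matrix (Fin n) (Fin n) (ZMod 2)) : ℝ :=
  (1 / 2) * ∑ i : Fin (n - 1), ∑ a : ZMod 2,
    (f ((1 + a • Matrix.single
          (⟨i.val, by have := i.isLt; omega⟩ : Fin n)
          (⟨i.val + 1, by have := i.isLt; omega⟩ : Fin n) (1 : ZMod 2)) * M) - f M)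

/-- The generator of the East process (at density 1/2, in the convention where a `1` at
site `i+1` allows entry `i` to be resampled to a uniform bit at rate 1). -/
noncomputable def eastGen (n : ℕ)
    (h : (Fin n → ZMod 2) → ℝ) (y : Fin n → ZMod 2) : ℝ :=
  ∑ i : Fin (n - 1),
    if y ⟨i.val + 1, by have := i.isLt; omega⟩ = 1 then
      ((1 / 2) * ∑ c : ZMod 2,
        h (Function.update y (⟨i.val, by have := i.isLt; omega⟩ : Fin n) c)) - h y
    else 0

theorem Matrix.one_add_smul_single_mul {m R : Type*} [Fintype m] [DecidableEq m] [Semiring R]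
    (a : R) (p q : m) (M : Matrix m m R) :
    (1 + a • single p q (1 : R)) * M = M.updateRow p (M p + a • M q) := by
  ext k l
  rw [Matrix.add_mul, Matrix.one_mul, Matrix.add_apply, smul_single, smul_eq_mul, mul_one,
    updateRow_apply]
  split_ifs with hk
  · subst hk
    rw [single_mul_apply_same, Pi.add_apply, Pi.smul_apply, smul_eq_mul]
  · rw [single_mul_apply_of_ne _ _ _ _ _ hk, add_zero]

theorem Matrix.updateRow_apply_col {m n R : Type*} [DecidableEq m] (M : Matrix m n R) (p : m)
    (v : n → R) (j : n) :
    (fun k => M.updateRow p v k j) = Function.update (fun k => M k j) p (v j) := by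
  funext k
  rw [updateRow_apply, Function.update_apply]

theorem Fintype.sum_add_mul_eq_sum {F β : Type*} [DivisionRing F] [Fintype F] [AddCommMonoid β]
    (f : F → β) (x : F) {b : F} (hb : b ≠ 0) :
    ∑ a, f (x + a * b) = ∑ a, f a :=
  Fintype.sum_equiv ((Equiv.mulRight₀ b hb).trans (Equiv.addLeft x)) _ _ fun _ => rfl

theorem half_sum_update_add_mul {ι : Type*} [DecidableEq ι] (h : (ι → ZMod 2) → ℝ)
    (y : ι → ZMod 2) (p : ι) (b : ZMod 2) :
    (1 / 2) * ∑ a : ZMod 2, (h (Function.update y p (y p + a * b)) - h y)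
      = if b = 1 then (1 / 2) * ∑ c : ZMod 2, h (Function.update y p c) - h y else 0 := by
  obtain rfl | rfl : b = 0 ∨ b = 1 := by decide +revert
  · simp
  · rw [if_pos rfl, Finset.sum_sub_distrib,
    Fintype.sum_add_mul_eq_sum (fun c => h (Function.update y p c)) (y p) one_ne_zero]
    simp only [Finset.sum_const, Finset.card_univ, ZMod.card, nsmul_eq_mul]
    ring

theorem column_projection_is_east_general (n : ℕ) (j : Fin n)
    (h : (Fin n → ZMod 2) → ℝ)
    (M : Matrix (Fin n) (Fin n) (ZMod 2)) :
    matrixWalkGen n (fun M' => h fun i => M' i j) M = eastGen n h (fun i => M i j) := by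
  unfold matrixWalkGen eastGen
  rw [Finset.mul_sum]
  refine Finset.sum_congr rfl fun i _ => ?_
  simp only [Matrix.one_add_smul_single_mul, Matrix.updateRow_apply_col, Pi.add_apply,
    Pi.smul_apply, smul_eq_mul]
  exact half_sum_update_add_mul h _ _ _

/-- Projecting the upper triangular matrix walk onto the `j`-th column gives a
Markov chain: for any function `h` of the `j`-th column, the matrix-walk generator applied
to `M ↦ h(j-th column of M)` is a function of the `j`-th column only, and equals the East
process generator (at density 1/2, with a `1` at entry `i+1` allowing entry `i` to be
resampled) applied to `h` at the `j`-th column. -/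
theorem column_projection_is_east (n : ℕ) (j : Fin n)
    (h : (Fin n → ZMod 2) → ℝ)
    (M : Matrix (Fin n) (Fin n) (ZMod 2))
    (hM : (∀ i, M i i = 1) ∧ ∀ i i' : Fin n, i' < i → M i i' = 0) :
    matrixWalkGen n (fun M' => h fun i => M' i j) M = eastGen n h (fun i => M i j) :=
  column_projection_is_east_general n j h M
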